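/- arXiv:2412.05638 — 3 statements merged into one kernel-verified Lean document; each statement's English description precedes it below -/
import Mathlib

section
/- Let φ : [0,∞) → (0,∞) be differentiable, strictly decreasing, with φ(t) → 0 as t → ∞, and fix an integer n ≥ 1. For r > 0 let t(r) be the unique solution of t/φ(t) = r, and define φ̃(r) = min over δ > 0 of (δ + δ^{-2n} φ(δ^{2n+1} r)). Then φ(t(r))^{1/(2n+1)} ≤ φ̃(r) ≤ 2 φ(t(r))^{1/(2n+1)} for all r > 0. -/
/-! With `δ₀ = φ(t)^{1/(2n+1)}` we have `δ₀^{2n+1} r = t`, so `δ₀` itself gives the value `2δ₀`.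
For `δ ≥ δ₀` the value is at least `δ ≥ δ₀`; for `δ < δ₀` the argument `δ^{2n+1} r` lies below `t`,
so monotonicity gives `δ^{-2n} φ(δ^{2n+1} r) ≥ δ^{-2n} δ₀^{2n+1} ≥ δ₀`. -/

open Real Filter Set

lemma le_rpow_neg_mul_rpow_add_one {k δ δ₀ : ℝ} (hk : 0 ≤ k) (hδ : 0 < δ) (hδδ₀ : δ ≤ δ₀) :
    δ₀ ≤ δ ^ (-k) * δ₀ ^ (k + 1) := by
  have hδ₀ : 0 < δ₀ := hδ.trans_le hδδ₀
  have hsplit : δ ^ (-k) * δ₀ ^ (k + 1) = δ₀ * (δ₀ / δ) ^ k := by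
    rw [rpow_add hδ₀, rpow_one, div_rpow hδ₀.le hδ.le, rpow_neg hδ.le]
    ring
  have hratio : 1 ≤ (δ₀ / δ) ^ k := one_le_rpow ((one_le_div hδ).mpr hδδ₀) hk
  rw [hsplit]
  nlinarith

lemma rpow_neg_mul_rpow_add_one {k δ : ℝ} (hδ : 0 < δ) : δ ^ (-k) * δ ^ (k + 1) = δ := by
  rw [← rpow_add hδ, neg_add_cancel_left, rpow_one]

section

variable {φ : ℝ → ℝ} {k r t δ₀ : ℝ}

lemma le_add_rpow_neg_mul_of_antitoneOn (hk : 0 ≤ k) (hφ : ∀ s ≥ (0:ℝ), 0 ≤ φ s)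
    (hanti : AntitoneOn φ (Ici 0)) (hr : 0 ≤ r) (hδ₀ : δ₀ ^ (k + 1) = φ t)
    (ht : δ₀ ^ (k + 1) * r = t) {δ : ℝ} (hδ : 0 < δ) :
    δ₀ ≤ δ + δ ^ (-k) * φ (δ ^ (k + 1) * r) := by
  have harg : 0 ≤ δ ^ (k + 1) * r := by positivity
  have hneg : 0 ≤ δ ^ (-k) := by positivity
  rcases le_or_gt δ₀ δ with hle | hlt
  · nlinarith [mul_nonneg hneg (hφ _ harg)]
  · have hsmall : δ ^ (k + 1) * r ≤ t := by
      rw [← ht]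
      gcongr
    have hmono : φ t ≤ φ (δ ^ (k + 1) * r) :=
      hanti harg (harg.trans hsmall) hsmall
    calc δ₀ ≤ δ ^ (-k) * δ₀ ^ (k + 1) := le_rpow_neg_mul_rpow_add_one hk hδ hlt.le
      _ ≤ δ + δ ^ (-k) * φ (δ ^ (k + 1) * r) := by
        rw [hδ₀]
        nlinarith [mul_le_mul_of_nonneg_left hmono hneg]

lemma add_rpow_neg_mul_eq_two_mul (hδ₀pos : 0 < δ₀) (hδ₀ : δ₀ ^ (k + 1) = φ t)
    (ht : δ₀ ^ (k + 1) * r = t) :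
    δ₀ + δ₀ ^ (-k) * φ (δ₀ ^ (k + 1) * r) = 2 * δ₀ := by
  rw [ht, ← hδ₀, rpow_neg_mul_rpow_add_one hδ₀pos]
  ring

end

theorem stmt0_general (n : ℕ) (φ : ℝ → ℝ)
    (hpos : ∀ t ≥ (0:ℝ), 0 < φ t)
    (hanti : StrictAntiOn φ (Set.Ici 0))
    (r t : ℝ) (hr : 0 < r) (ht : 0 < t) (hteq : t / φ t = r) :
    φ t ^ ((1:ℝ) / (2 * (n:ℝ) + 1)) ≤
      sInf {y : ℝ | ∃ δ > (0:ℝ), y = δ + δ ^ (-(2 * (n:ℝ))) * φ (δ ^ (2 * (n:ℝ) + 1) * r)} ∧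
    sInf {y : ℝ | ∃ δ > (0:ℝ), y = δ + δ ^ (-(2 * (n:ℝ))) * φ (δ ^ (2 * (n:ℝ) + 1) * r)} ≤
      2 * φ t ^ ((1:ℝ) / (2 * (n:ℝ) + 1)) := by
  have hφt : 0 < φ t := hpos t ht.le
  have hk : (0:ℝ) ≤ 2 * n := by positivity
  set δ₀ := φ t ^ ((1:ℝ) / (2 * (n:ℝ) + 1)) with hδ₀def
  have hδ₀pos : 0 < δ₀ := by positivity
  have hδ₀ : δ₀ ^ (2 * (n:ℝ) + 1) = φ t := by
    rw [hδ₀def, one_div, rpow_inv_rpow hφt.le (by positivity)]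
  have hδ₀t : δ₀ ^ (2 * (n:ℝ) + 1) * r = t := by
    rw [hδ₀, ← hteq, mul_div_cancel₀ _ hφt.ne']
  have hlb : ∀ y ∈ {y : ℝ | ∃ δ > (0:ℝ),
      y = δ + δ ^ (-(2 * (n:ℝ))) * φ (δ ^ (2 * (n:ℝ) + 1) * r)}, δ₀ ≤ y := by
    rintro y ⟨δ, hδ, rfl⟩
    exact le_add_rpow_neg_mul_of_antitoneOn hk (fun s hs ↦ (hpos s hs).le) hanti.antitoneOn
      hr.le hδ₀ hδ₀t hδ
  have hmem : 2 * δ₀ ∈ {y : ℝ | ∃ δ > (0:ℝ),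
      y = δ + δ ^ (-(2 * (n:ℝ))) * φ (δ ^ (2 * (n:ℝ) + 1) * r)} :=
    ⟨δ₀, hδ₀pos, (add_rpow_neg_mul_eq_two_mul hδ₀pos hδ₀ hδ₀t).symm⟩
  exact ⟨le_csInf ⟨2 * δ₀, hmem⟩ hlb, csInf_le ⟨δ₀, hlb⟩ hmem⟩

theorem stmt0 (n : ℕ) (hn : 1 ≤ n) (φ : ℝ → ℝ)
    (hpos : ∀ t ≥ (0:ℝ), 0 < φ t)
    (hdiff : DifferentiableOn ℝ φ (Set.Ici 0))
    (hanti : StrictAntiOn φ (Set.Ici 0))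
    (hlim : Tendsto φ atTop (nhds 0))
    (r t : ℝ) (hr : 0 < r) (ht : 0 < t) (hteq : t / φ t = r) :
    φ t ^ ((1:ℝ) / (2 * (n:ℝ) + 1)) ≤
      sInf {y : ℝ | ∃ δ > (0:ℝ), y = δ + δ ^ (-(2 * (n:ℝ))) * φ (δ ^ (2 * (n:ℝ) + 1) * r)} ∧
    sInf {y : ℝ | ∃ δ > (0:ℝ), y = δ + δ ^ (-(2 * (n:ℝ))) * φ (δ ^ (2 * (n:ℝ) + 1) * r)} ≤
      2 * φ t ^ ((1:ℝ) / (2 * (n:ℝ) + 1)) :=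
  stmt0_general n φ hpos hanti r t hr ht hteq
end

section
/- Let Λ̃ : (0,∞) → (0,∞) be defined by Λ̃(r) = inf_{δ>0} (δ + δ^{−2n} Λ(δ^{2n+1} r)) where Λ : (0,∞) → (0,∞) is decreasing and n ≥ 1 is an integer. Then for every a > 0 and r > 0, a^{−1/(2n+1)} min{a, 1} Λ̃(r) ≤ Λ̃(a r) ≤ a^{−1/(2n+1)} max{a, 1} Λ̃(r). -/
/-!
Substituting `δ ↦ b δ` with `b = a ^ (-1/(2n+1))` turns the argument `δ ^ (2n+1) * (a r)` of `Λ` into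
`δ ^ (2n+1) * r` and multiplies the two summands `δ` and `δ ^ (-2n) Λ(…)` by `b` and `a b` respectively,
both at most `b max a 1`; this gives the upper bound. The lower bound is the upper bound for `a⁻¹` at `a r`.
-/

/-- The set whose infimum is `Λ̃ r`, for a real exponent `s` in place of `2n`. -/
def tildeSet (s : ℝ) (Λ : ℝ → ℝ) (r : ℝ) : Set ℝ :=
  {y : ℝ | ∃ δ > (0:ℝ), y = δ + δ ^ (-s) * Λ (δ ^ (s + 1) * r)}

section TildeSet

variable {s : ℝ} {Λ : ℝ → ℝ} {r : ℝ}

lemma tildeSet_nonempty : (tildeSet s Λ r).Nonempty :=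
  ⟨_, 1, one_pos, rfl⟩

lemma tildeSet_bddBelow (hΛ : ∀ r > (0:ℝ), 0 < Λ r) (hr : 0 < r) : BddBelow (tildeSet s Λ r) := by
  refine ⟨0, ?_⟩
  rintro y ⟨δ, hδ, rfl⟩
  have := hΛ (δ ^ (s + 1) * r) (by positivity)
  positivity

lemma rpow_neg_inv_add_one_rpow_add_one {a : ℝ} (ha : 0 < a) (hs : s + 1 ≠ 0) :
    (a ^ (-(1:ℝ) / (s + 1))) ^ (s + 1) = a⁻¹ := by
  rw [← Real.rpow_mul ha.le, div_mul_cancel₀ _ hs, Real.rpow_neg_one]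

lemma rpow_neg_inv_add_one_rpow_neg {a : ℝ} (ha : 0 < a) (hs : s + 1 ≠ 0) :
    (a ^ (-(1:ℝ) / (s + 1))) ^ (-s) = a * a ^ (-(1:ℝ) / (s + 1)) := by
  rw [← Real.rpow_mul ha.le, show -(1:ℝ) / (s + 1) * -s = 1 + -(1:ℝ) / (s + 1) by
    field_simp; ring, Real.rpow_add ha, Real.rpow_one]

lemma sInf_tildeSet_mul_le (hs : s + 1 ≠ 0) (hΛ : ∀ r > (0:ℝ), 0 < Λ r) {a : ℝ} (ha : 0 < a)
    (hr : 0 < r) :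
    sInf (tildeSet s Λ (a * r)) ≤ a ^ (-(1:ℝ) / (s + 1)) * max a 1 * sInf (tildeSet s Λ r) := by
  set b := a ^ (-(1:ℝ) / (s + 1))
  have hb : 0 < b := by positivity
  have hc : 0 < b * max a 1 := by positivity
  rw [← div_le_iff₀' hc]
  refine le_csInf tildeSet_nonempty ?_
  rintro _ ⟨δ, hδ, rfl⟩
  rw [div_le_iff₀' hc]
  have hmem : b * δ + a * b * δ ^ (-s) * Λ (δ ^ (s + 1) * r) ∈ tildeSet s Λ (a * r) := by
    refine ⟨b * δ, by positivity, ?_⟩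
    rw [Real.mul_rpow hb.le hδ.le, Real.mul_rpow hb.le hδ.le,
      rpow_neg_inv_add_one_rpow_add_one ha hs, rpow_neg_inv_add_one_rpow_neg ha hs,
      show a⁻¹ * δ ^ (s + 1) * (a * r) = δ ^ (s + 1) * r by field_simp]
  refine (csInf_le (tildeSet_bddBelow hΛ (by positivity)) hmem).trans ?_
  have hΛδ := hΛ (δ ^ (s + 1) * r) (by positivity)
  have hδs : 0 < δ ^ (-s) := by positivity
  have hb₁ : b ≤ b * max a 1 := le_mul_of_one_le_right hb.le (le_max_right a 1)
  have hab : a * b ≤ b * max a 1 := by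
    rw [mul_comm a b]
    exact mul_le_mul_of_nonneg_left (le_max_left a 1) hb.le
  calc b * δ + a * b * δ ^ (-s) * Λ (δ ^ (s + 1) * r)
      ≤ b * max a 1 * δ + b * max a 1 * δ ^ (-s) * Λ (δ ^ (s + 1) * r) := by gcongr
    _ = b * max a 1 * (δ + δ ^ (-s) * Λ (δ ^ (s + 1) * r)) := by ring

lemma le_sInf_tildeSet_mul (hs : s + 1 ≠ 0) (hΛ : ∀ r > (0:ℝ), 0 < Λ r) {a : ℝ} (ha : 0 < a)
    (hr : 0 < r) :
    a ^ (-(1:ℝ) / (s + 1)) * min a 1 * sInf (tildeSet s Λ r) ≤ sInf (tildeSet s Λ (a * r)) := by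
  have h := sInf_tildeSet_mul_le hs hΛ (inv_pos.mpr ha) (mul_pos ha hr)
  have hmax : max a⁻¹ 1 = (min a 1)⁻¹ := by
    rcases le_total a 1 with h | h
    · rw [min_eq_left h, max_eq_left (one_le_inv_iff₀.mpr ⟨ha, h⟩)]
    · rw [min_eq_right h, max_eq_right (inv_le_one_of_one_le₀ h), inv_one]
  rw [inv_mul_cancel_left₀ ha.ne', Real.inv_rpow ha.le, hmax, ← mul_inv] at h
  exact (le_inv_mul_iff₀ (by positivity)).mp h

end TildeSet

theorem stmt10_general (n : ℕ) (Λ : ℝ → ℝ)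
    (hpos : ∀ r > (0:ℝ), 0 < Λ r) :
    ∀ a > (0:ℝ), ∀ r > (0:ℝ),
      a ^ (-(1:ℝ)/(2*(n:ℝ)+1)) * min a 1 *
        sInf {y : ℝ | ∃ δ > (0:ℝ), y = δ + δ ^ (-(2*(n:ℝ))) * Λ (δ ^ (2*(n:ℝ)+1) * r)} ≤
      sInf {y : ℝ | ∃ δ > (0:ℝ), y = δ + δ ^ (-(2*(n:ℝ))) * Λ (δ ^ (2*(n:ℝ)+1) * (a * r))} ∧
      sInf {y : ℝ | ∃ δ > (0:ℝ), y = δ + δ ^ (-(2*(n:ℝ))) * Λ (δ ^ (2*(n:ℝ)+1) * (a * r))} ≤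
      a ^ (-(1:ℝ)/(2*(n:ℝ)+1)) * max a 1 *
        sInf {y : ℝ | ∃ δ > (0:ℝ), y = δ + δ ^ (-(2*(n:ℝ))) * Λ (δ ^ (2*(n:ℝ)+1) * r)} := by
  intro a ha r hr
  have hs : 2 * (n:ℝ) + 1 ≠ 0 := by positivity
  exact ⟨le_sInf_tildeSet_mul hs hpos ha hr, sInf_tildeSet_mul_le hs hpos ha hr⟩

theorem stmt10 (n : ℕ) (hn : 1 ≤ n) (Λ : ℝ → ℝ)
    (hpos : ∀ r > (0:ℝ), 0 < Λ r) (hanti : AntitoneOn Λ (Set.Ioi 0)) :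
    ∀ a > (0:ℝ), ∀ r > (0:ℝ),
      a ^ (-(1:ℝ)/(2*(n:ℝ)+1)) * min a 1 *
        sInf {y : ℝ | ∃ δ > (0:ℝ), y = δ + δ ^ (-(2*(n:ℝ))) * Λ (δ ^ (2*(n:ℝ)+1) * r)} ≤
      sInf {y : ℝ | ∃ δ > (0:ℝ), y = δ + δ ^ (-(2*(n:ℝ))) * Λ (δ ^ (2*(n:ℝ)+1) * (a * r))} ∧
      sInf {y : ℝ | ∃ δ > (0:ℝ), y = δ + δ ^ (-(2*(n:ℝ))) * Λ (δ ^ (2*(n:ℝ)+1) * (a * r))} ≤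
      a ^ (-(1:ℝ)/(2*(n:ℝ)+1)) * max a 1 *
        sInf {y : ℝ | ∃ δ > (0:ℝ), y = δ + δ ^ (-(2*(n:ℝ))) * Λ (δ ^ (2*(n:ℝ)+1) * r)} :=
  stmt10_general n Λ hpos
end

section
/- Let σ ∈ (0,1], n ≥ 2, and let s, τ : (0,∞) → [σ, 1] satisfy: s(r) = (n/r^n) ∫₀^r τ(t) t^{n−1} dt, τ is decreasing, and τ(r)^{1} ≥ σ^{1/n} s(r)^{(n−1)/n} for all r > 0. Then there is a constant C ∈ (0,1], depending only on n and σ, such that C (s(r) − σ) ≤ τ(r) − σ ≤ s(r) − σ for all r > 0. -/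
/-!
Since `τ` is decreasing, `s(r)` is a weighted mean of values `τ(t) ≥ τ(r)`, whence `τ ≤ s`.
For the lower bound, `x ↦ σ^{1/n} x^{(n-1)/n}` is concave and takes the values `σ` and `σ^{1/n}`
at `x = σ` and `x = 1`, so on `[σ, 1]` it lies above its chord; together with the isoperimetric
inequality `τ ≥ σ^{1/n} s^{(n-1)/n}` this gives `τ - σ ≥ C (s - σ)` with `C` the chord's slope.
-/

open intervalIntegral Set

theorem ConcaveOn.add_slope_mul_le {f : ℝ → ℝ} {S : Set ℝ} (hf : ConcaveOn ℝ S f) {a b x : ℝ}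
    (ha : a ∈ S) (hb : b ∈ S) (hx : x ∈ Icc a b) :
    f a + (f b - f a) / (b - a) * (x - a) ≤ f x := by
  rcases hx.1.eq_or_lt with rfl | hax
  · simp
  have hxS : x ∈ S := hf.1.segment_subset ha hb (segment_eq_Icc (hx.1.trans hx.2) ▸ hx)
  have hslope := hf.neg.secant_mono ha hxS hb hax.ne' (hax.trans_le hx.2).ne' hx.2
  rw [Pi.neg_apply, Pi.neg_apply, Pi.neg_apply, neg_sub_neg, neg_sub_neg, ← neg_sub (f x),
    ← neg_sub (f b), neg_div, neg_div, neg_le_neg_iff] at hslope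
  rw [← le_sub_iff_add_le', ← le_div_iff₀ (sub_pos.2 hax)]
  exact hslope

theorem AntitoneOn.le_mul_integral_mul_pow {f : ℝ → ℝ} {n : ℕ} {r : ℝ}
    (hf : AntitoneOn f (Ioc 0 r)) (hn : 0 < n) (hr : 0 < r)
    (hint : IntervalIntegrable (fun t => f t * t ^ (n - 1)) MeasureTheory.volume 0 r) :
    f r ≤ n / r ^ n * ∫ t in (0:ℝ)..r, f t * t ^ (n - 1) := by
  have hconst : ∫ t in (0:ℝ)..r, f r * t ^ (n - 1) = f r * (r ^ n / n) := by
    rw [integral_const_mul, integral_pow, Nat.sub_add_cancel hn, Nat.cast_sub hn]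
    simp [hn.ne']
  have hmono : ∫ t in (0:ℝ)..r, f r * t ^ (n - 1) ≤ ∫ t in (0:ℝ)..r, f t * t ^ (n - 1) :=
    integral_mono_on_of_le_Ioo hr.le ((intervalIntegrable_pow _).const_mul _) hint
      fun t ht => mul_le_mul_of_nonneg_right
        (hf ⟨ht.1, ht.2.le⟩ ⟨hr, le_rfl⟩ ht.2.le) (pow_nonneg ht.1.le _)
  have hn' : (0:ℝ) < n := by exact_mod_cast hn
  rw [div_mul_eq_mul_div, le_div_iff₀ (by positivity)]
  calc f r * r ^ n = n * ∫ t in (0:ℝ)..r, f r * t ^ (n - 1) := by rw [hconst]; field_simp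
    _ ≤ n * ∫ t in (0:ℝ)..r, f t * t ^ (n - 1) := mul_le_mul_of_nonneg_left hmono hn'.le

/-- The constant `ψ(σ⁻¹) = (σ^{-(n-1)/n} - 1) / (σ⁻¹ - 1)`, written after multiplying numerator and
denominator by `σ`; it is the slope of the chord of `x ↦ σ^{1/n} x^{(n-1)/n}` over `[σ, 1]`. -/
noncomputable def chordSlope (n : ℕ) (σ : ℝ) : ℝ :=
  if σ = 1 then 1 else (σ ^ ((1:ℝ) / n) - σ) / (1 - σ)

theorem chordSlope_pos {n : ℕ} (hn : 2 ≤ n) {σ : ℝ} (hσ0 : 0 < σ) (hσ1 : σ ≤ 1) :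
    0 < chordSlope n σ := by
  unfold chordSlope
  split_ifs with hσ
  · exact one_pos
  have hσ1 : σ < 1 := hσ1.lt_of_ne hσ
  have hexp : (1:ℝ) / n < 1 := by
    rw [div_lt_one (by positivity)]
    exact_mod_cast hn
  have hlt : σ < σ ^ ((1:ℝ) / n) := by
    simpa using Real.rpow_lt_rpow_of_exponent_gt hσ0 hσ1 hexp
  exact div_pos (sub_pos.2 hlt) (sub_pos.2 hσ1)

theorem chordSlope_le_one (n : ℕ) {σ : ℝ} (hσ0 : 0 ≤ σ) (hσ1 : σ ≤ 1) : chordSlope n σ ≤ 1 := by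
  unfold chordSlope
  split_ifs with hσ
  · exact le_rfl
  rw [div_le_one (sub_pos.2 (hσ1.lt_of_ne hσ))]
  linarith [Real.rpow_le_one hσ0 hσ1 (by positivity : (0:ℝ) ≤ 1 / n)]

theorem add_chordSlope_mul_le {n : ℕ} (hn : 0 < n) {σ x : ℝ} (hσ0 : 0 < σ) (hσx : σ ≤ x)
    (hx1 : x ≤ 1) :
    σ + chordSlope n σ * (x - σ) ≤ σ ^ ((1:ℝ) / n) * x ^ (((n:ℝ) - 1) / n) := by
  have hn' : (0:ℝ) < n := by exact_mod_cast hn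
  rcases hσx.trans hx1 |>.eq_or_lt with rfl | hσ1
  · simp [le_antisymm hx1 hσx]
  have hσσ : σ ^ ((1:ℝ) / n) * σ ^ (((n:ℝ) - 1) / n) = σ := by
    rw [← Real.rpow_add hσ0, show (1:ℝ) / n + ((n:ℝ) - 1) / n = 1 by field_simp; ring,
      Real.rpow_one]
  have hconc : ConcaveOn ℝ (Ici 0) fun y => σ ^ ((1:ℝ) / n) * y ^ (((n:ℝ) - 1) / n) :=
    (Real.concaveOn_rpow (div_nonneg (sub_nonneg.2 (by exact_mod_cast hn)) hn'.le)
      (div_le_one_of_le₀ (by linarith) hn'.le)).smul (by positivity)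
  have hchord := hconc.add_slope_mul_le (mem_Ici.2 hσ0.le) (mem_Ici.2 zero_le_one) ⟨hσx, hx1⟩
  simp only [Real.one_rpow, mul_one, hσσ] at hchord
  rwa [chordSlope, if_neg hσ1.ne]

theorem stmt12_general (n : ℕ) (hn : 2 ≤ n) (σ : ℝ) (hσ0 : 0 < σ) (hσ1 : σ ≤ 1)
    (s τ : ℝ → ℝ)
    (hs_range : ∀ r > (0:ℝ), σ ≤ s r ∧ s r ≤ 1)
    (hs_eq : ∀ r > (0:ℝ), s r = ((n:ℝ) / r ^ n) * ∫ t in (0:ℝ)..r, τ t * t ^ (n - 1))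
    (hτ_anti : AntitoneOn τ (Set.Ioi 0))
    (hisop : ∀ r > (0:ℝ), σ ^ ((1:ℝ)/(n:ℝ)) * (s r) ^ (((n:ℝ) - 1)/(n:ℝ)) ≤ τ r) :
    ∃ C : ℝ, 0 < C ∧ C ≤ 1 ∧
      ∀ r > (0:ℝ), C * (s r - σ) ≤ τ r - σ ∧ τ r - σ ≤ s r - σ := by
  refine ⟨chordSlope n σ, chordSlope_pos hn hσ0 hσ1, chordSlope_le_one n hσ0.le hσ1,
    fun r hr => ⟨?_, ?_⟩⟩
  · linarith [add_chordSlope_mul_le (n := n) (by omega) hσ0 (hs_range r hr).1 (hs_range r hr).2,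
      hisop r hr]
  · -- a non-integrable integrand would give the junk value `s r = 0 < σ`
    have hint : IntervalIntegrable (fun t => τ t * t ^ (n - 1)) MeasureTheory.volume 0 r := by
      refine intervalIntegrable_of_integral_ne_zero fun h => ?_
      have := hs_eq r hr
      rw [h, mul_zero] at this
      linarith [(hs_range r hr).1]
    have hmean := (hτ_anti.mono Ioc_subset_Ioi_self).le_mul_integral_mul_pow (by omega) hr hint
    linarith [hs_eq r hr]

theorem stmt12 (n : ℕ) (hn : 2 ≤ n) (σ : ℝ) (hσ0 : 0 < σ) (hσ1 : σ ≤ 1)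
    (s τ : ℝ → ℝ)
    (hs_range : ∀ r > (0:ℝ), σ ≤ s r ∧ s r ≤ 1)
    (hτ_range : ∀ r > (0:ℝ), σ ≤ τ r ∧ τ r ≤ 1)
    (hs_eq : ∀ r > (0:ℝ), s r = ((n:ℝ) / r ^ n) * ∫ t in (0:ℝ)..r, τ t * t ^ (n - 1))
    (hτ_anti : AntitoneOn τ (Set.Ioi 0))
    (hisop : ∀ r > (0:ℝ), σ ^ ((1:ℝ)/(n:ℝ)) * (s r) ^ (((n:ℝ) - 1)/(n:ℝ)) ≤ τ r) :
    ∃ C : ℝ, 0 < C ∧ C ≤ 1 ∧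
      ∀ r > (0:ℝ), C * (s r - σ) ≤ τ r - σ ∧ τ r - σ ≤ s r - σ :=
  stmt12_general n hn σ hσ0 hσ1 s τ hs_range hs_eq hτ_anti hisop
end
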